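/- Let k be a field and let φ : k⟦x₁,…,xₙ⟧ → k⟦u₁,…,u_m⟧ be a morphism of formal power series rings. Write x′ = (x₁,…,x_{n−1}) and suppose that f = xₙ^d + a₁(x′)xₙ^{d−1} + ⋯ + a_d(x′), with a_i ∈ k⟦x′⟧ and a_i(0) = 0, is a generator of ker φ. Then: (1) f is the unique such element of ker φ: if g = xₙ^d + b₁(x′)xₙ^{d−1} + ⋯ + b_d(x′) with b_i ∈ k⟦x′⟧, b_i(0) = 0, satisfies φ(g) = 0, then g = f. (2) There exists a function μ : ℕ → ℕ such that for every k ∈ ℕ and every g = xₙ^d + b₁(x′)xₙ^{d−1} + ⋯ + b_d(x′) with b_i ∈ k⟦x′⟧, b_i(0) = 0, and φ(g) ∈ (u)^{μ(k)}, the coefficients of the b_i agree with those of the a_i up to degree k: writing a_i = Σ_β a_{i,β} x′^β and b_i = Σ_β b_{i,β} x′^β, one has b_{i,β} = a_{i,β} for all i = 1,…,d and all multi-indices β with |β| ≤ k. -/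

import Mathlib

open Filter Topology Set

noncomputable section

namespace Paper

variable {K : Type} [RCLike K]

/-! ### Ranks of analytic maps between Euclidean spaces -/

/-- The rank of the differential of `f` at the point `q`. -/
def diffRank {m n : ℕ} (f : (Fin m → K) → (Fin n → K)) (q : Fin m → K) : ℕ :=
  Module.finrank K (LinearMap.range (fderiv K f q : (Fin m → K) →ₗ[K] (Fin n → K)))

/-- The generic rank of `f` at `p` : the maximum, over points `q` in arbitrarily small
neighborhoods of `p`, of the rank of the differential of `f` at `q`. -/
def genericRank {m n : ℕ} (f : (Fin m → K) → (Fin n → K)) (p : Fin m → K) : ℕ :=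
  sInf { r : ℕ | ∃ U ∈ 𝓝 p, r = sSup (diffRank f '' U) }

/-- Partial derivative in the direction of the `j`-th coordinate. -/
def pderivK {m : ℕ} (j : Fin m) (f : (Fin m → K) → K) : (Fin m → K) → K :=
  fun q => fderiv K f q (Pi.single j 1)

/-- Iterated partial derivative in the direction of the `j`-th coordinate. -/
def pderivIter {m : ℕ} (j : Fin m) : ℕ → ((Fin m → K) → K) → ((Fin m → K) → K)
  | 0, f => f
  | k + 1, f => pderivK j (pderivIter j k f)

/-- Iterated partial derivative `∂^γ`. -/
def mpderiv {m : ℕ} (γ : Fin m →₀ ℕ) (f : (Fin m → K) → K) : (Fin m → K) → K :=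
  (List.finRange m).foldr (fun j g => pderivIter j (γ j) g) f

/-- Taylor coefficient `(1/γ!) ∂^γ f (p)`. -/
def taylorCoeff {m : ℕ} (f : (Fin m → K) → K) (p : Fin m → K) (γ : Fin m →₀ ℕ) : K :=
  (((∏ j, Nat.factorial (γ j) : ℕ) : K))⁻¹ * mpderiv γ f p

/-- The Taylor series of `f` at `p`, as a formal multivariate power series. -/
def taylorSeriesAt {m : ℕ} (f : (Fin m → K) → K) (p : Fin m → K) :
    MvPowerSeries (Fin m) K :=
  fun γ => taylorCoeff f p γ

/-- The exponent `δ ↦ N` with all coordinates equal to `N`. -/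
def expBound (n N : ℕ) : Fin n →₀ ℕ := Finsupp.equivFunOnFinite.symm (fun _ => N)

/-- Substitution of the family of power series `a` (each having zero constant term) in the
power series `F`.  The coefficient of `u^γ` in `F(a)` is
`∑ over δ of (coeff δ F) * coeff γ (a^δ)`; only exponents `δ` with `|δ| ≤ |γ|` contribute. -/
def msubst {R : Type*} [CommRing R] {m n : ℕ} (a : Fin n → MvPowerSeries (Fin m) R)
    (F : MvPowerSeries (Fin n) R) : MvPowerSeries (Fin m) R :=
  fun γ => ∑ δ ∈ Finset.Iic (expBound n (γ.sum fun _ e => e)),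
      (MvPowerSeries.coeff δ F) * MvPowerSeries.coeff γ (∏ i, a i ^ δ i)

/-- The Krull dimension of the set of prime ideals containing `S`; when `S` is an ideal of `R`,
this is the Krull dimension of the quotient ring `R/S`. -/
def dimOfPrimesOver {R : Type*} [CommRing R] (S : Set R) : WithBot ℕ∞ :=
  Order.krullDim { p : PrimeSpectrum R // S ⊆ p.asIdeal }

/-- The germ of `f` at `p`, translated so that it maps `0` to `0`. -/
def centered {m n : ℕ} (f : (Fin m → K) → (Fin n → K)) (p : Fin m → K) :
    (Fin m → K) → (Fin n → K) :=
  fun u => f (p + u) - f p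

/-- The kernel of the morphism `K⟦x₁,…,xₙ⟧ → K⟦u₁,…,u_m⟧` obtained by substituting the Taylor
expansions at `p` of the components of `f` (in coordinates centred at `p` and `f p`). -/
def formalKer {m n : ℕ} (f : (Fin m → K) → (Fin n → K)) (p : Fin m → K) :
    Set (MvPowerSeries (Fin n) K) :=
  { F | msubst (fun i => taylorSeriesAt (fun u => centered f p u i) 0) F = 0 }

/-- The formal rank of `f` at `p` : the Krull dimension of `K⟦x⟧/ker(f̂*_p)`. -/
def formalRank {m n : ℕ} (f : (Fin m → K) → (Fin n → K)) (p : Fin m → K) : WithBot ℕ∞ :=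
  dimOfPrimesOver (formalKer f p)

/-- `f` is regular at `p` in the sense of Gabrielov if its generic rank equals its formal
rank at `p`. -/
def GabrielovRegularAt {m n : ℕ} (f : (Fin m → K) → (Fin n → K)) (p : Fin m → K) : Prop :=
  (genericRank f p : WithBot ℕ∞) = formalRank f p

/-! ### Rings of germs of analytic functions and the analytic rank -/

/-- The ring `O_p` of germs at `p` of `K`-analytic functions, as a subring of the ring of all
germs of functions at `p`. -/
def analyticGermRing (K : Type) [RCLike K] {m : ℕ} (p : Fin m → K) :
    Subring ((𝓝 p).Germ K) where
  carrier := { g | ∃ f : (Fin m → K) → K, AnalyticAt K f p ∧ g = (f : (𝓝 p).Germ K) }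
  mul_mem' := by
    rintro a b ⟨f, hf, rfl⟩ ⟨g, hg, rfl⟩
    exact ⟨f * g, hf.mul hg, (Filter.Germ.coe_mul f g).symm⟩
  one_mem' := ⟨1, analyticAt_const, rfl⟩
  add_mem' := by
    rintro a b ⟨f, hf, rfl⟩ ⟨g, hg, rfl⟩
    exact ⟨f + g, hf.add hg, (Filter.Germ.coe_add f g).symm⟩
  zero_mem' := ⟨0, analyticAt_const, rfl⟩
  neg_mem' := by
    rintro a ⟨f, hf, rfl⟩
    exact ⟨-f, hf.neg, (Filter.Germ.coe_neg f).symm⟩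

/-- The kernel of the pullback morphism `f*_p : O_{f(p)} → O_p`, `g ↦ g ∘ f`. -/
def analyticKer {m n : ℕ} (f : (Fin m → K) → (Fin n → K)) (p : Fin m → K) :
    Set ↥(analyticGermRing K (f p)) :=
  { g | ∃ h : (Fin n → K) → K, AnalyticAt K h (f p) ∧
        (g : (𝓝 (f p)).Germ K) = (h : (𝓝 (f p)).Germ K) ∧ ∀ᶠ x in 𝓝 p, h (f x) = 0 }

/-- The analytic rank of `f` at `p` : the Krull dimension of `O_{f(p)}/ker(f*_p)`. -/
def analyticRank {m n : ℕ} (f : (Fin m → K) → (Fin n → K)) (p : Fin m → K) : WithBot ℕ∞ :=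
  dimOfPrimesOver (analyticKer f p)

/-! ### Analytic manifolds, modeled on `Fin l → K`, via charted spaces -/

/-- The image of the point `a` in the chart at `a`. -/
def chBase (K : Type) [RCLike K] (l : ℕ) {M : Type*} [TopologicalSpace M]
    [ChartedSpace (Fin l → K) M] (a : M) : Fin l → K :=
  chartAt (Fin l → K) a a

/-- The local representative of `f : M → N` in the charts at `a` and `f a`. -/
def chRep (K : Type) [RCLike K] (l l' : ℕ) {M N : Type*} [TopologicalSpace M]
    [ChartedSpace (Fin l → K) M] [TopologicalSpace N] [ChartedSpace (Fin l' → K) N]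
    (f : M → N) (a : M) : (Fin l → K) → (Fin l' → K) :=
  (chartAt (Fin l' → K) (f a)) ∘ f ∘ (chartAt (Fin l → K) a).symm

/-- `M` is a `K`-analytic manifold: all transition maps of the atlas are analytic. -/
def AnalyticCharts (K : Type) [RCLike K] (l : ℕ) (M : Type*) [TopologicalSpace M]
    [ChartedSpace (Fin l → K) M] : Prop :=
  ∀ x y : M, ∀ z ∈ (chartAt (Fin l → K) x).target ∩
      ((chartAt (Fin l → K) x).symm ⁻¹' (chartAt (Fin l → K) y).source),
    AnalyticAt K ((chartAt (Fin l → K) y) ∘ (chartAt (Fin l → K) x).symm) z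

/-- A map between analytic manifolds is analytic at `a` if it is continuous at `a` and its local
representative in charts is analytic. -/
def MAnalyticAt (K : Type) [RCLike K] (l l' : ℕ) {M N : Type*} [TopologicalSpace M]
    [ChartedSpace (Fin l → K) M] [TopologicalSpace N] [ChartedSpace (Fin l' → K) N]
    (f : M → N) (a : M) : Prop :=
  ContinuousAt f a ∧ AnalyticAt K (chRep K l l' f a) (chBase K l a)

/-- A `K`-valued function on a manifold is analytic at `a` if its representative in the chart
at `a` is analytic. -/
def MAnalyticFunAt {K : Type} [RCLike K] (l : ℕ) {M : Type*} [TopologicalSpace M]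
    [ChartedSpace (Fin l → K) M] (f : M → K) (a : M) : Prop :=
  AnalyticAt K (f ∘ (chartAt (Fin l → K) a).symm) (chBase K l a)

/-- `f : M → N` is regular at `a` in the sense of Gabrielov: its generic rank at `a` equals its
formal rank at `a` (both computed on its local representative in charts). -/
def MRegularAt (K : Type) [RCLike K] (l l' : ℕ) {M N : Type*} [TopologicalSpace M]
    [ChartedSpace (Fin l → K) M] [TopologicalSpace N] [ChartedSpace (Fin l' → K) N]
    (f : M → N) (a : M) : Prop :=
  GabrielovRegularAt (chRep K l l' f a) (chBase K l a)

/-- The generic rank of `f : M → N` at `a`. -/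
def mgenericRank (K : Type) [RCLike K] (l l' : ℕ) {M N : Type*} [TopologicalSpace M]
    [ChartedSpace (Fin l → K) M] [TopologicalSpace N] [ChartedSpace (Fin l' → K) N]
    (f : M → N) (a : M) : ℕ :=
  genericRank (chRep K l l' f a) (chBase K l a)

/-- The formal rank of `f : M → N` at `a`. -/
def mformalRank (K : Type) [RCLike K] (l l' : ℕ) {M N : Type*} [TopologicalSpace M]
    [ChartedSpace (Fin l → K) M] [TopologicalSpace N] [ChartedSpace (Fin l' → K) N]
    (f : M → N) (a : M) : WithBot ℕ∞ :=
  formalRank (chRep K l l' f a) (chBase K l a)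

/-- The analytic rank of `f : M → N` at `a`. -/
def manalyticRank (K : Type) [RCLike K] (l l' : ℕ) {M N : Type*} [TopologicalSpace M]
    [ChartedSpace (Fin l → K) M] [TopologicalSpace N] [ChartedSpace (Fin l' → K) N]
    (f : M → N) (a : M) : WithBot ℕ∞ :=
  analyticRank (chRep K l l' f a) (chBase K l a)

/-- A subset `Z` of a manifold `M` is an analytic subset if every point of `M` has an open
neighborhood `U` and finitely many analytic functions on `U` whose common zero set is `Z ∩ U`. -/
def IsAnalyticSet (K : Type) [RCLike K] (l : ℕ) {M : Type*} [TopologicalSpace M]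
    [ChartedSpace (Fin l → K) M] (Z : Set M) : Prop :=
  ∀ a : M, ∃ U : Set M, IsOpen U ∧ a ∈ U ∧ ∃ s : ℕ, ∃ f : Fin s → M → K,
    (∀ i, ∀ x ∈ U, MAnalyticFunAt l (f i) x) ∧ Z ∩ U = { x ∈ U | ∀ i, f i x = 0 }

/-- A subset `Z` of an open set `Ω ⊆ K^m` is an analytic subset of `Ω`. -/
def IsAnalyticSubsetIn {K : Type} [RCLike K] {m : ℕ} (Ω Z : Set (Fin m → K)) : Prop :=
  Z ⊆ Ω ∧ ∀ p ∈ Ω, ∃ V : Set (Fin m → K), IsOpen V ∧ p ∈ V ∧ V ⊆ Ω ∧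
    ∃ s : ℕ, ∃ f : Fin s → (Fin m → K) → K,
      (∀ i, ∀ x ∈ V, AnalyticAt K (f i) x) ∧ Z ∩ V = { x ∈ V | ∀ i, f i x = 0 }

/-- A proper map: preimages of compact sets are compact. -/
def ProperMap {M N : Type*} [TopologicalSpace M] [TopologicalSpace N] (f : M → N) : Prop :=
  ∀ C : Set N, IsCompact C → IsCompact (f ⁻¹' C)

/-! ### Semianalytic and subanalytic subsets of real analytic manifolds -/

section Real

variable (l : ℕ) {M : Type*} [TopologicalSpace M] [ChartedSpace (Fin l → ℝ) M]

/-- A semianalytic subset of a real analytic manifold. -/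
def Semianalytic (X : Set M) : Prop :=
  ∀ a : M, ∃ U : Set M, IsOpen U ∧ a ∈ U ∧ ∃ p q : ℕ,
    ∃ f : Fin p → M → ℝ, ∃ g : Fin p → Fin q → M → ℝ,
      (∀ i, ∀ x ∈ U, MAnalyticFunAt l (f i) x) ∧
      (∀ i j, ∀ x ∈ U, MAnalyticFunAt l (g i j) x) ∧
      X ∩ U = ⋃ i, { x ∈ U | f i x = 0 ∧ ∀ j, 0 < g i j x }

/-- Analyticity at a point for real valued functions on `M × ℝ^q` (chart on the first factor,
identity on the second). -/
def ProdAnalyticFunAt {q : ℕ} (f : M × (Fin q → ℝ) → ℝ) (z : M × (Fin q → ℝ)) : Prop :=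
  AnalyticAt ℝ (fun y : (Fin l → ℝ) × (Fin q → ℝ) => f ((chartAt (Fin l → ℝ) z.1).symm y.1, y.2))
    (chartAt (Fin l → ℝ) z.1 z.1, z.2)

/-- A semianalytic subset of `M × ℝ^q`. -/
def SemianalyticProd {q : ℕ} (S : Set (M × (Fin q → ℝ))) : Prop :=
  ∀ a : M × (Fin q → ℝ), ∃ U : Set (M × (Fin q → ℝ)), IsOpen U ∧ a ∈ U ∧ ∃ p r : ℕ,
    ∃ f : Fin p → M × (Fin q → ℝ) → ℝ, ∃ g : Fin p → Fin r → M × (Fin q → ℝ) → ℝ,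
      (∀ i, ∀ x ∈ U, ProdAnalyticFunAt l (f i) x) ∧
      (∀ i j, ∀ x ∈ U, ProdAnalyticFunAt l (g i j) x) ∧
      S ∩ U = ⋃ i, { x ∈ U | f i x = 0 ∧ ∀ j, 0 < g i j x }

/-- A subanalytic subset of a real analytic manifold: locally the projection of a relatively
compact semianalytic subset of `M × ℝ^q`. -/
def Subanalytic (X : Set M) : Prop :=
  ∀ a : M, ∃ U : Set M, IsOpen U ∧ a ∈ U ∧ ∃ q : ℕ, ∃ S : Set (M × (Fin q → ℝ)),
    SemianalyticProd l S ∧ IsCompact (closure S) ∧ X ∩ U = Prod.fst '' S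

/-- `S ⊆ ℝ^l` is, near the point `p`, a `k`-dimensional analytic submanifold: locally it is the
zero set of `l - k` analytic functions with linearly independent differentials. -/
def EuclidSubmanifoldAt (S : Set (Fin l → ℝ)) (k : ℕ) (p : Fin l → ℝ) : Prop :=
  k ≤ l ∧ ∃ V : Set (Fin l → ℝ), IsOpen V ∧ p ∈ V ∧
    ∃ h : Fin (l - k) → (Fin l → ℝ) → ℝ,
      (∀ i, ∀ x ∈ V, AnalyticAt ℝ (h i) x) ∧
      (∀ x ∈ V, LinearIndependent ℝ (fun i => fderiv ℝ (h i) x)) ∧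
      S ∩ V = { x ∈ V | ∀ i, h i x = 0 }

/-- `X` is, near the point `a ∈ M`, a `k`-dimensional analytic submanifold of `M`. -/
def SubmanifoldAt (X : Set M) (k : ℕ) (a : M) : Prop :=
  ∃ U : Set M, IsOpen U ∧ a ∈ U ∧ U ⊆ (chartAt (Fin l → ℝ) a).source ∧
    ∀ x ∈ X ∩ U,
      EuclidSubmanifoldAt l ((chartAt (Fin l → ℝ) a) '' (X ∩ U)) k (chartAt (Fin l → ℝ) a x)

/-- `X^{(k)}`: the set of points of `X` near which `X` is a `k`-dimensional analytic
submanifold of `M`. -/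
def smoothPts (X : Set M) (k : ℕ) : Set M :=
  { a | a ∈ X ∧ SubmanifoldAt l X k a }

/-- The dimension of a subanalytic set: the largest `k` such that `X^{(k)} ≠ ∅`
(`⊥` if there is no such `k`). -/
def sdim (X : Set M) : WithBot ℕ∞ :=
  ⨆ k ∈ { k : ℕ | (smoothPts l X k).Nonempty }, (k : WithBot ℕ∞)

/-- `Σ^{(k)}`: the closure of `X^{(k)}` intersected with `X`. -/
def strat (X : Set M) (k : ℕ) : Set M :=
  closure (smoothPts l X k) ∩ X

/-- The germ of `X` at `a` is contained in the germ of `Y` at `a`. -/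
def germSubset {M : Type*} [TopologicalSpace M] (X Y : Set M) (a : M) : Prop :=
  ∃ U ∈ 𝓝 a, X ∩ U ⊆ Y

/-- The germs of `X` and `Y` at `a` coincide. -/
def germEq {M : Type*} [TopologicalSpace M] (X Y : Set M) (a : M) : Prop :=
  ∃ U ∈ 𝓝 a, X ∩ U = Y ∩ U

/-- The dimension of the germ of `X` at `a`. -/
def germDim (X : Set M) (a : M) : WithBot ℕ∞ :=
  ⨅ U ∈ 𝓝 a, sdim l (X ∩ U)

/-- A set `X` of pure dimension is Nash at `a` if there is a germ of a semianalytic set at `a`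
containing the germ of `X` and of the same dimension. -/
def NashAtPure (X : Set M) (a : M) : Prop :=
  ∃ Y : Set M, Semianalytic l Y ∧ germSubset X Y a ∧ germDim l Y a = germDim l X a

/-- A subanalytic set `X` is Nash at `a` if each pure-dimensional part `Σ^{(k)}` of `X`
is Nash at `a`. -/
def NashAt (X : Set M) (a : M) : Prop :=
  ∀ k : ℕ, NashAtPure l (strat l X k) a

/-- `𝒩(X)`: the set of points at which `X` is Nash. -/
def NashPoints (X : Set M) : Set M :=
  { a | NashAt l X a }

/-- `𝒮𝒜(X)`: the set of points at which the germ of `X` is semianalytic. -/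
def SAPoints (X : Set M) : Set M :=
  { a | ∃ Y : Set M, Semianalytic l Y ∧ germEq X Y a }

end Real

/-! ### Admissible families of analytic germs -/

/-- The admissible family `Ψ_a(u) = Φ(φ(a)+u) − Φ(φ(a))` associated to `Φ` and `φ`. -/
def Psi {K : Type} [RCLike K] {l m n : ℕ} (Φ : (Fin m → K) → (Fin n → K))
    (φ : (Fin l → K) → (Fin m → K)) (a : Fin l → K) : (Fin m → K) → (Fin n → K) :=
  fun u => Φ (φ a + u) - Φ (φ a)

/-- The ring `O(Λ)` of analytic functions on `Λ`: functions on `Λ` which extend to a function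
analytic at every point of `Λ`. -/
def Oring {K : Type} [RCLike K] {l : ℕ} (Λ : Set (Fin l → K)) : Subring (↥Λ → K) where
  carrier := { f | ∃ g : (Fin l → K) → K, (∀ x ∈ Λ, AnalyticAt K g x) ∧ ∀ a : ↥Λ, f a = g ↑a }
  mul_mem' := by
    rintro f₁ f₂ ⟨g₁, h₁, e₁⟩ ⟨g₂, h₂, e₂⟩
    exact ⟨g₁ * g₂, fun x hx => (h₁ x hx).mul (h₂ x hx), fun a => by
      simp [Pi.mul_apply, e₁ a, e₂ a]⟩
  one_mem' := ⟨1, fun x _ => analyticAt_const, fun a => rfl⟩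
  add_mem' := by
    rintro f₁ f₂ ⟨g₁, h₁, e₁⟩ ⟨g₂, h₂, e₂⟩
    exact ⟨g₁ + g₂, fun x hx => (h₁ x hx).add (h₂ x hx), fun a => by
      simp [Pi.add_apply, e₁ a, e₂ a]⟩
  zero_mem' := ⟨0, fun x _ => analyticAt_const, fun a => rfl⟩
  neg_mem' := by
    rintro f ⟨g, h, e⟩
    exact ⟨-g, fun x hx => (h x hx).neg, fun a => by simp [Pi.neg_apply, e a]⟩

/-- The coefficient `F_{i,γ} = (1/γ!) ∂^γ (x_i ∘ Φ) ∘ φ`, as a function on `Λ`. -/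
def PsiLcoeffFun {K : Type} [RCLike K] {l m n : ℕ} (Φ : (Fin m → K) → (Fin n → K))
    (φ : (Fin l → K) → (Fin m → K)) (Λ : Set (Fin l → K)) (i : Fin n) (γ : Fin m →₀ ℕ) :
    ↥Λ → K :=
  fun a => taylorCoeff (fun w => Φ w i) (φ ↑a) γ

open scoped Classical in
/-- The coefficient `F_{i,γ}` as an element of `L = Frac(O(Λ))`. -/
def PsiLcoeff {K : Type} [RCLike K] {l m n : ℕ} (Φ : (Fin m → K) → (Fin n → K))
    (φ : (Fin l → K) → (Fin m → K)) (Λ : Set (Fin l → K)) (i : Fin n) (γ : Fin m →₀ ℕ) :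
    FractionRing ↥(Oring Λ) :=
  if h : PsiLcoeffFun Φ φ Λ i γ ∈ Oring Λ then
    algebraMap ↥(Oring Λ) (FractionRing ↥(Oring Λ)) ⟨PsiLcoeffFun Φ φ Λ i γ, h⟩
  else 0

/-- The power series `Ψ*_L(x_i) = ∑_{γ ≠ 0} F_{i,γ} u^γ ∈ L⟦u⟧`. -/
def PsiLseries {K : Type} [RCLike K] {l m n : ℕ} (Φ : (Fin m → K) → (Fin n → K))
    (φ : (Fin l → K) → (Fin m → K)) (Λ : Set (Fin l → K)) (i : Fin n) :
    MvPowerSeries (Fin m) (FractionRing ↥(Oring Λ)) :=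
  fun γ => if γ = 0 then 0 else PsiLcoeff Φ φ Λ i γ

/-- Formal partial derivative of a multivariate power series. -/
def formalPDeriv {R : Type*} [CommRing R] {m : ℕ} (i : Fin m) (F : MvPowerSeries (Fin m) R) :
    MvPowerSeries (Fin m) R :=
  fun γ => ((γ i + 1 : ℕ) : R) * F (γ + Finsupp.single i 1)

/-- The generic rank of `Ψ*_L`: the rank of the Jacobian matrix `[∂ Ψ*_L(x_j) / ∂ u_i]` over
the fraction field of `L⟦u⟧`. -/
def LgenericRank {K : Type} [RCLike K] {l m n : ℕ} (Φ : (Fin m → K) → (Fin n → K))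
    (φ : (Fin l → K) → (Fin m → K)) (Λ : Set (Fin l → K)) : ℕ :=
  (Matrix.of fun (i : Fin m) (j : Fin n) =>
    (algebraMap (MvPowerSeries (Fin m) (FractionRing ↥(Oring Λ)))
        (FractionRing (MvPowerSeries (Fin m) (FractionRing ↥(Oring Λ)))))
      (formalPDeriv i (PsiLseries Φ φ Λ j))).rank

/-- The kernel of `Ψ*_L : L⟦x⟧ → L⟦u⟧`. -/
def LformalKer {K : Type} [RCLike K] {l m n : ℕ} (Φ : (Fin m → K) → (Fin n → K))
    (φ : (Fin l → K) → (Fin m → K)) (Λ : Set (Fin l → K)) :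
    Set (MvPowerSeries (Fin n) (FractionRing ↥(Oring Λ))) :=
  { F | msubst (fun i => PsiLseries Φ φ Λ i) F = 0 }

/-- The formal rank of `Ψ*_L`: the Krull dimension of `L⟦x⟧ / ker(Ψ*_L)`. -/
def LformalRank {K : Type} [RCLike K] {l m n : ℕ} (Φ : (Fin m → K) → (Fin n → K))
    (φ : (Fin l → K) → (Fin m → K)) (Λ : Set (Fin l → K)) : WithBot ℕ∞ :=
  dimOfPrimesOver (LformalKer Φ φ Λ)

/-! ### Distinguished polynomials in `R⟦x₁,…,xₙ⟧[y]` as power series in `n+1` variables -/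

/-- Restriction of an exponent on `n+1` variables to the first `n` variables. -/
def finRestrict {n : ℕ} (γ : Fin (n+1) →₀ ℕ) : Fin n →₀ ℕ :=
  Finsupp.equivFunOnFinite.symm (fun j => γ j.castSucc)

/-- The monic polynomial `y^d + ∑_{i=0}^{d-1} (∑_β c i β x^β) y^i` — where `c i` is the
coefficient of `y^{d-1-i}` — as a power series in the `n+1` variables `(x₁,…,xₙ,y)`,
`y` being the last variable. -/
def wpoly {R : Type*} [CommRing R] {n : ℕ} (d : ℕ) (c : Fin d → (Fin n →₀ ℕ) → R) :
    MvPowerSeries (Fin (n+1)) R :=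
  fun γ =>
    if he : γ (Fin.last n) < d then c ⟨d - 1 - γ (Fin.last n), by omega⟩ (finRestrict γ)
    else if γ (Fin.last n) = d ∧ finRestrict γ = 0 then 1 else 0

open scoped Classical in
/-- An analytic function on `Λ`, viewed as an element of `L = Frac(O(Λ))`. -/
def Lelem {K : Type} [RCLike K] {l : ℕ} (Λ : Set (Fin l → K)) (g : (Fin l → K) → K) :
    FractionRing ↥(Oring Λ) :=
  if h : (fun a : ↥Λ => g ↑a) ∈ Oring Λ then
    algebraMap ↥(Oring Λ) (FractionRing ↥(Oring Λ)) ⟨fun a : ↥Λ => g ↑a, h⟩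
  else 0

/-! ### Identification of `ℂ^m` with `ℝ^{2m}` -/

/-- The standard identification `ℝ^{2m} → ℂ^m`. -/
def toC (m : ℕ) (v : Fin (2*m) → ℝ) : Fin m → ℂ :=
  fun j => (v ⟨2*j.1, by have := j.2; omega⟩ : ℝ) + (v ⟨2*j.1+1, by have := j.2; omega⟩ : ℝ) * Complex.I

/-- The standard identification `ℂ^n → ℝ^{2n}`. -/
def toR (n : ℕ) (w : Fin n → ℂ) : Fin (2*n) → ℝ :=
  fun i => if i.1 % 2 = 0 then (w ⟨i.1 / 2, by have := i.2; omega⟩).re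
           else (w ⟨i.1 / 2, by have := i.2; omega⟩).im

/-! ### Miscellaneous -/

/-- The semialgebraic diffeomorphism `x ↦ x / √(1+‖x‖²)` of `ℝⁿ` onto the open unit ball. -/
def stereo (n : ℕ) : (Fin n → ℝ) → (Fin n → ℝ) :=
  fun x i => x i / Real.sqrt (1 + ∑ j, (x j) ^ 2)

/-- A finitely subanalytic subset of `ℝⁿ`. -/
def FinitelySubanalytic (n : ℕ) (X : Set (Fin n → ℝ)) : Prop :=
  Subanalytic n (stereo n '' X)

/-- A real analytic manifold of dimension `k`, as a bundled charted space with analytic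
transition maps. -/
structure RealAnalyticManifold (k : ℕ) where
  /-- the underlying set of the manifold -/
  carrier : Type
  [topInst : TopologicalSpace carrier]
  [csInst : ChartedSpace (Fin k → ℝ) carrier]
  t2 : T2Space carrier
  analytic : AnalyticCharts ℝ k carrier

attribute [instance] RealAnalyticManifold.topInst RealAnalyticManifold.csInst

end Paper

/-! Since `φ f = 0`, `φ g = φ (g - f)`, and `g - f = ∑ (b_i - a_i) xₙ^(d-i)` has `xₙ`-degree
`< d`. As `f(0, xₙ) = xₙ^d`, uniqueness of Weierstrass division by `f` shows that no nonzero
series of `xₙ`-degree `< d` is a multiple of `f`, so the linear map `b - a ↦ φ (g - f)` is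
injective. Because `φ` is a substitution, every coefficient of `φ (g - f)` is a finite linear
combination of the coefficients of the `b_i - a_i`. An injective family of such finitary
functionals spans the finitely supported dual, so each coefficient of `b_i - a_i` is a
combination of finitely many coefficients of `φ (g - f)`, all of which vanish once
`φ g ∈ (u)^N` for `N` large. -/

namespace Finsupp

variable {K ι κ : Type*} [Field K]

theorem span_range_eq_top_of_separating {w : κ → ι →₀ K}
    (hw : ∀ c : ι → K, (∀ j, linearCombination K c (w j) = 0) → c = 0) :
    Submodule.span K (range w) = ⊤ := by
  by_contra hne
  obtain ⟨f, hf_ne, hf_span⟩ :=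
    Submodule.exists_dual_map_eq_bot_of_lt_top (lt_top_iff_ne_top.2 hne) inferInstance
  have hf : f = linearCombination K (fun i => f (single i 1)) := by ext; simp
  have hf_zero : (fun i => f (single i 1)) = 0 := hw _ fun j => by
    rw [← hf, ← Submodule.mem_bot K, ← hf_span]
    exact Submodule.mem_map_of_mem (Submodule.subset_span ⟨j, rfl⟩)
  exact hf_ne (by rw [hf, hf_zero]; ext; simp)

theorem exists_finset_forall_eq_zero_of_separating {w : κ → ι →₀ K}
    (hw : ∀ c : ι → K, (∀ j, linearCombination K c (w j) = 0) → c = 0) (T : Finset ι) :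
    ∃ s : Finset κ, ∀ c : ι → K,
      (∀ j ∈ s, linearCombination K c (w j) = 0) → ∀ i ∈ T, c i = 0 := by
  classical
  have h_mem (i : ι) : single i (1 : K) ∈ Submodule.span K (range w) := by
    rw [span_range_eq_top_of_separating hw]
    exact Submodule.mem_top
  choose r hr using fun i => mem_span_range_iff_exists_finsupp.1 (h_mem i)
  refine ⟨T.biUnion fun i => (r i).support, fun c hc i hi => ?_⟩
  calc c i = linearCombination K c (single i 1) := by simp
    _ = ∑ j ∈ (r i).support, r i j * linearCombination K c (w j) := by
      rw [← hr i, Finsupp.sum, map_sum]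
      simp
    _ = 0 := Finset.sum_eq_zero fun j hj =>
      by rw [hc j (Finset.mem_biUnion.2 ⟨i, hi, hj⟩), mul_zero]

end Finsupp

namespace MvPowerSeries

variable {σ R : Type*} [CommSemiring R]

theorem le_order_of_mem_span_X_pow {N : ℕ} {f : MvPowerSeries σ R}
    (hf : f ∈ Ideal.span (range (X : σ → MvPowerSeries σ R)) ^ N) : (N : ℕ∞) ≤ f.order := by
  induction N generalizing f with
  | zero => simp
  | succ N ih =>
    rw [pow_succ] at hf
    refine Submodule.mul_induction_on hf (fun g hg h hh => ?_) (fun g h hg hh => ?_)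
    · have h_one : 1 ≤ h.order := by
        rw [one_le_order_iff_constCoeff_eq_zero, ← RingHom.mem_ker]
        refine (Ideal.span_le (I := RingHom.ker constantCoeff)).2 ?_ hh
        rintro _ ⟨i, rfl⟩
        simp
      calc ((N + 1 : ℕ) : ℕ∞) = N + 1 := by push_cast; rfl
        _ ≤ g.order + h.order := add_le_add (ih hg) h_one
        _ ≤ (g * h).order := le_order_mul
    · exact (le_min hg hh).trans min_order_le_add

theorem coeff_eq_zero_of_mem_span_X_pow {N : ℕ} {f : MvPowerSeries σ R}
    (hf : f ∈ Ideal.span (range (X : σ → MvPowerSeries σ R)) ^ N) {γ : σ →₀ ℕ}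
    (hγ : γ.degree < N) : coeff γ f = 0 :=
  coeff_of_lt_order ((Nat.cast_lt.2 hγ).trans_le (le_order_of_mem_span_X_pow hf))

theorem exists_forall_apply_eq_zero_of_mem_span_X_pow {K ι : Type*} [Field K]
    {L : (ι → K) → MvPowerSeries σ K}
    (hL_coeff : ∀ γ, ∃ w : ι →₀ K, ∀ c, coeff γ (L c) = Finsupp.linearCombination K c w)
    (hL : ∀ c, L c = 0 → c = 0) (T : Finset ι) :
    ∃ N : ℕ, ∀ c, L c ∈ Ideal.span (range (X : σ → MvPowerSeries σ K)) ^ N →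
      ∀ i ∈ T, c i = 0 := by
  choose w hw using hL_coeff
  obtain ⟨s, hs⟩ := Finsupp.exists_finset_forall_eq_zero_of_separating (w := w)
    (fun c hc => hL c (ext fun γ => by rw [hw, hc, map_zero])) T
  refine ⟨s.sup Finsupp.degree + 1, fun c hc => hs c fun γ hγ => ?_⟩
  rw [← hw]
  exact coeff_eq_zero_of_mem_span_X_pow hc (Nat.lt_succ_of_le (Finset.le_sup hγ))

end MvPowerSeries

namespace Paper

open MvPowerSeries
open Finsupp (single)
open Finset.HasAntidiagonal

variable {n : ℕ}

@[simp]
theorem finRestrict_apply (γ : Fin (n + 1) →₀ ℕ) (j : Fin n) :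
    finRestrict γ j = γ j.castSucc := by
  simp [finRestrict]

theorem finRestrict_add (p q : Fin (n + 1) →₀ ℕ) :
    finRestrict (p + q) = finRestrict p + finRestrict q := by
  ext; simp

theorem finRestrict_single_last (t : ℕ) : finRestrict (single (Fin.last n) t) = 0 := by
  ext j; simp

theorem eq_of_finRestrict_eq {p q : Fin (n + 1) →₀ ℕ} (h : finRestrict p = finRestrict q)
    (h_last : p (Fin.last n) = q (Fin.last n)) : p = q := by
  ext j
  induction j using Fin.lastCases with
  | last => exact h_last
  | cast j => simpa using DFunLike.congr_fun h j

/-- Uniqueness in Weierstrass division by `f`, where `hf_last` and `hf_zero` say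
`f(0, y) = y ^ d`. -/
theorem eq_zero_of_coeff_mul_eq_zero {R : Type*} [CommSemiring R] {d : ℕ}
    {f h : MvPowerSeries (Fin (n + 1)) R}
    (hf_last : coeff (single (Fin.last n) d) f = 1)
    (hf_zero : ∀ q, finRestrict q = 0 → q ≠ single (Fin.last n) d → coeff q f = 0)
    (hfh : ∀ γ, d ≤ γ (Fin.last n) → coeff γ (f * h) = 0) : h = 0 := by
  classical
  suffices ∀ s α, (finRestrict α).degree = s → coeff α h = 0 from
    ext fun α => this _ α rfl
  intro s
  induction s using Nat.strong_induction_on with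
  | _ s ih =>
  intro α hα
  have h_mem : (single (Fin.last n) d, α) ∈ antidiagonal (α + single (Fin.last n) d) :=
    Finset.HasAntidiagonal.mem_antidiagonal.2 (add_comm _ _)
  have h_other : ∀ qp ∈ antidiagonal (α + single (Fin.last n) d),
      qp ≠ (single (Fin.last n) d, α) → coeff qp.1 f * coeff qp.2 h = 0 := by
    rintro ⟨q, p⟩ hqp hne
    replace hqp : q + p = α + single (Fin.last n) d :=
      Finset.HasAntidiagonal.mem_antidiagonal.1 hqp
    by_cases hq : finRestrict q = 0
    · have hq_ne : q ≠ single (Fin.last n) d := by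
        rintro rfl
        exact hne (by rw [add_left_cancel (hqp.trans (add_comm α _))])
      rw [hf_zero q hq hq_ne, zero_mul]
    · have h_sum : (finRestrict q).degree + (finRestrict p).degree = s := by
        rw [← map_add, ← finRestrict_add, hqp, finRestrict_add, finRestrict_single_last,
          add_zero, hα]
      have h_pos : 0 < (finRestrict q).degree := by
        rwa [pos_iff_ne_zero, Ne, Finsupp.degree_eq_zero_iff]
      rw [ih _ (by omega) p rfl, mul_zero]
  have h_coeff := hfh (α + single (Fin.last n) d) (by simp)
  rwa [coeff_mul, Finset.sum_eq_single_of_mem _ h_mem h_other, hf_last, one_mul] at h_coeff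

section LowerPart

variable {R : Type*} [CommRing R] {d : ℕ}

/-- `∑ c (i, β) x^β y^(d-1-i)`: the terms of `y`-degree `< d`, indexed as in `wpoly`. -/
def lowerPart (d : ℕ) (c : Fin d × (Fin n →₀ ℕ) → R) : MvPowerSeries (Fin (n + 1)) R :=
  fun γ => if h : γ (Fin.last n) < d then
    c (⟨d - 1 - γ (Fin.last n), by omega⟩, finRestrict γ) else 0

theorem wpoly_sub_wpoly (b a : Fin d → (Fin n →₀ ℕ) → R) :
    wpoly d b - wpoly d a = lowerPart d (Function.uncurry b - Function.uncurry a) := by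
  ext γ
  simp only [map_sub, coeff_apply, wpoly, lowerPart]
  split_ifs <;> simp

theorem coeff_lowerPart_of_le {c : Fin d × (Fin n →₀ ℕ) → R} {γ : Fin (n + 1) →₀ ℕ}
    (hγ : d ≤ γ (Fin.last n)) : coeff γ (lowerPart d c) = 0 := by
  simp [coeff_apply, lowerPart, hγ]

theorem eq_zero_of_lowerPart_eq_zero {c : Fin d × (Fin n →₀ ℕ) → R}
    (hc : lowerPart d c = 0) : c = 0 := by
  funext ⟨i, β⟩
  let δ : Fin (n + 1) →₀ ℕ := Finsupp.equivFunOnFinite.symm (Fin.snoc β (d - 1 - i))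
  have hδ_last : δ (Fin.last n) = d - 1 - i := by simp [δ]
  have hδ_restrict : finRestrict δ = β := by ext; simp [δ]
  have h_lt : δ (Fin.last n) < d := by have := i.pos; omega
  have h_idx : (⟨d - 1 - δ (Fin.last n), by omega⟩ : Fin d) = i := by
    ext; simp only [hδ_last]; omega
  have h := congr_arg (coeff δ) hc
  rw [map_zero] at h
  simpa [coeff_apply, lowerPart, h_lt, h_idx, hδ_restrict] using h

theorem coeff_wpoly_single_last (a : Fin d → (Fin n →₀ ℕ) → R) :
    coeff (single (Fin.last n) d) (wpoly d a) = 1 := by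
  simp [coeff_apply, wpoly, finRestrict_single_last]

theorem coeff_wpoly_of_finRestrict_eq_zero {a : Fin d → (Fin n →₀ ℕ) → R}
    (ha0 : ∀ i, a i 0 = 0) {q : Fin (n + 1) →₀ ℕ} (hq : finRestrict q = 0)
    (hq_ne : q ≠ single (Fin.last n) d) : coeff q (wpoly d a) = 0 := by
  have h_last : q (Fin.last n) ≠ d := fun h =>
    hq_ne (eq_of_finRestrict_eq (by rw [hq, finRestrict_single_last]) (by simp [h]))
  simp [coeff_apply, wpoly, hq, ha0, h_last]

theorem eq_zero_of_lowerPart_mem_span_wpoly {a : Fin d → (Fin n →₀ ℕ) → R}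
    (ha0 : ∀ i, a i 0 = 0) {c : Fin d × (Fin n →₀ ℕ) → R}
    (hc : lowerPart d c ∈ Ideal.span {wpoly d a}) : c = 0 := by
  obtain ⟨h, hh⟩ := Ideal.mem_span_singleton'.1 hc
  have h_zero : h = 0 :=
    eq_zero_of_coeff_mul_eq_zero (coeff_wpoly_single_last a)
      (fun _ => coeff_wpoly_of_finRestrict_eq_zero ha0) fun γ hγ => by
        rw [mul_comm, hh]
        exact coeff_lowerPart_of_le hγ
  exact eq_zero_of_lowerPart_eq_zero (by rw [← hh, h_zero, zero_mul])

theorem exists_coeff_msubst_lowerPart_eq_linearCombination {m : ℕ}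
    (A : Fin (n + 1) → MvPowerSeries (Fin m) R) (γ : Fin m →₀ ℕ) :
    ∃ w : Fin d × (Fin n →₀ ℕ) →₀ R, ∀ c,
      coeff γ (msubst A (lowerPart d c)) = Finsupp.linearCombination R c w := by
  refine ⟨∑ δ ∈ Finset.Iic (expBound (n + 1) (γ.sum fun _ e => e)),
    if h : δ (Fin.last n) < d then
      single (⟨d - 1 - δ (Fin.last n), by omega⟩, finRestrict δ) (coeff γ (∏ i, A i ^ δ i))
    else 0, fun c => ?_⟩
  rw [map_sum, coeff_apply, msubst]
  refine Finset.sum_congr rfl fun δ _ => ?_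
  simp only [coeff_apply, lowerPart]
  split_ifs <;> simp [mul_comm]

end LowerPart

theorem chevalley_approximation_general (𝕂 : Type) [Field 𝕂] (m n d : ℕ)
    (φ : MvPowerSeries (Fin (n+1)) 𝕂 →+* MvPowerSeries (Fin m) 𝕂)
    (hsubst : ∀ G, φ G = msubst (fun i => φ (MvPowerSeries.X i)) G)
    (a : Fin d → (Fin n →₀ ℕ) → 𝕂) (ha0 : ∀ i, a i 0 = 0)
    (hgen : RingHom.ker φ = Ideal.span {wpoly d a}) :
    (∀ b : Fin d → (Fin n →₀ ℕ) → 𝕂, (∀ i, b i 0 = 0) → φ (wpoly d b) = 0 →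
      wpoly d b = wpoly d a) ∧
    ∃ μ : ℕ → ℕ, ∀ k : ℕ, ∀ b : Fin d → (Fin n →₀ ℕ) → 𝕂, (∀ i, b i 0 = 0) →
      φ (wpoly d b) ∈
        (Ideal.span (Set.range (MvPowerSeries.X : Fin m → MvPowerSeries (Fin m) 𝕂))) ^ (μ k) →
      ∀ (i : Fin d) (β : Fin n →₀ ℕ), (β.sum fun _ e => e) ≤ k → b i β = a i β := by
  have hφ_wpoly (b : Fin d → (Fin n →₀ ℕ) → 𝕂) :
      φ (wpoly d b) = φ (lowerPart d (Function.uncurry b - Function.uncurry a)) := by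
    have hφa : φ (wpoly d a) = 0 := RingHom.mem_ker.1 (hgen ▸ Ideal.mem_span_singleton_self _)
    rw [← wpoly_sub_wpoly, map_sub, hφa, sub_zero]
  have hL_inj (c) (hc : φ (lowerPart d c) = 0) : c = 0 :=
    eq_zero_of_lowerPart_mem_span_wpoly ha0 (hgen ▸ RingHom.mem_ker.2 hc)
  have hL_coeff (γ) : ∃ w, ∀ c,
      coeff γ (φ (lowerPart d c)) = Finsupp.linearCombination 𝕂 c w := by
    obtain ⟨w, hw⟩ := exists_coeff_msubst_lowerPart_eq_linearCombination (fun i => φ (X i)) γ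
    exact ⟨w, fun c => by rw [hsubst, hw]⟩
  refine ⟨fun b _ hb => ?_, ?_⟩
  · have h_eq := hL_inj _ ((hφ_wpoly b).symm.trans hb)
    congr 1
    funext i β
    exact sub_eq_zero.1 (congr_fun h_eq (i, β))
  · choose μ hμ using fun k => exists_forall_apply_eq_zero_of_mem_span_X_pow hL_coeff hL_inj
      (Finset.univ ×ˢ (Finsupp.finite_of_degree_le k).toFinset)
    refine ⟨μ, fun k b _ hb i β hβ => sub_eq_zero.1 (hμ k _ (hφ_wpoly b ▸ hb) (i, β) ?_)⟩
    simp only [Finset.mem_product, Finset.mem_univ, Set.Finite.mem_toFinset, Set.mem_ofPred_eq,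
      true_and]
    exact hβ

/-- **Chevalley approximation.** Let `φ : 𝕂⟦x₁,…,xₙ,y⟧ → 𝕂⟦u₁,…,u_m⟧` be a morphism of formal
power series rings and suppose that the distinguished monic polynomial
`f = y^d + a₁(x) y^{d-1} + ⋯ + a_d(x)`, with `a_i(0) = 0`, generates `ker φ`. Then `f` is the
unique such element of `ker φ`, and there is a function `μ : ℕ → ℕ` such that any
`g = y^d + b₁(x) y^{d-1} + ⋯ + b_d(x)` with `b_i(0) = 0` and `φ(g) ∈ (u)^{μ(k)}` has the same
coefficients as `f` up to degree `k`. -/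
theorem chevalley_approximation (𝕂 : Type) [Field 𝕂] (m n d : ℕ)
    (φ : MvPowerSeries (Fin (n+1)) 𝕂 →+* MvPowerSeries (Fin m) 𝕂)
    (hconst : ∀ i, MvPowerSeries.constantCoeff (φ (MvPowerSeries.X i)) = 0)
    (hsubst : ∀ G, φ G = msubst (fun i => φ (MvPowerSeries.X i)) G)
    (a : Fin d → (Fin n →₀ ℕ) → 𝕂) (ha0 : ∀ i, a i 0 = 0)
    (hgen : RingHom.ker φ = Ideal.span {wpoly d a}) :
    (∀ b : Fin d → (Fin n →₀ ℕ) → 𝕂, (∀ i, b i 0 = 0) → φ (wpoly d b) = 0 →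
      wpoly d b = wpoly d a) ∧
    ∃ μ : ℕ → ℕ, ∀ k : ℕ, ∀ b : Fin d → (Fin n →₀ ℕ) → 𝕂, (∀ i, b i 0 = 0) →
      φ (wpoly d b) ∈
        (Ideal.span (Set.range (MvPowerSeries.X : Fin m → MvPowerSeries (Fin m) 𝕂))) ^ (μ k) →
      ∀ (i : Fin d) (β : Fin n →₀ ℕ), (β.sum fun _ e => e) ≤ k → b i β = a i β :=
  chevalley_approximation_general 𝕂 m n d φ hsubst a ha0 hgen

end Paper
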